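/- arXiv:1807.05982 — 3 statements merged into one kernel-verified Lean document; each statement's English description precedes it below -/
import Mathlib

section
/- Let Ã_B have full column rank, Ã_j = Ã_B Ã_B† Ã_j, and u' = Ã_B†Ã_j. If i* is an index of B with u'_{i*} ≠ 0, then the matrix obtained from A_B by replacing column i* with A_j still has affinely independent columns (equivalently, replacing column Ã_{B(i*)} by Ã_j in Ã_B preserves full column rank). -/
open Matrix

noncomputable section

def aug {m n : ℕ} (A : Matrix (Fin m) (Fin n) ℝ) : Matrix (Fin (m + 1)) (Fin n) ℝ :=
  Matrix.of fun i j => Fin.cases 1 (fun i' => A i' j) i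

def pinv {p k : ℕ} (M : Matrix (Fin p) (Fin k) ℝ) : Matrix (Fin k) (Fin p) ℝ :=
  (Mᵀ * M)⁻¹ * Mᵀ

/-! `Ã_B Ã_B† Ã_j = Ã_j` says `Ã_j = Ã_B u'`, a combination of the columns of `Ã_B` whose
coefficient on column `i*` is nonzero; exchanging that column for `Ã_j` keeps the columns
linearly independent, as in the Steinitz exchange. -/

theorem LinearIndependent.update_sum_smul {ι K V : Type*} [Fintype ι] [DecidableEq ι] [Field K]
    [AddCommGroup V] [Module K V] {f : ι → V} (hf : LinearIndependent K f) {c : ι → K} {i : ι}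
    (hc : c i ≠ 0) : LinearIndependent K (Function.update f i (∑ j, c j • f j)) :=
  hf.update i _ ⟨1, one_mem _, (Finsupp.linearEquivFunOnFinite K K ι).symm c,
    mem_nonZeroDivisors_iff_ne_zero.mpr hc, by
      rw [one_smul, Finsupp.linearCombination_eq_fintype_linearCombination_apply,
        Fintype.linearCombination_apply]⟩

theorem Matrix.linearIndependent_transpose_updateCol_mulVec {m n K : Type*} [Fintype n]
    [DecidableEq n] [Field K] {M : Matrix m n K} (hM : LinearIndependent K Mᵀ) {c : n → K} {i : n}
    (hc : c i ≠ 0) : LinearIndependent K (M.updateCol i (M *ᵥ c))ᵀ := by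
  rw [← updateRow_transpose, ← vecMul_transpose, vecMul_eq_sum]
  exact hM.update_sum_smul hc

theorem stmt4_general {m k : ℕ}
    (AB : Matrix (Fin (m + 1)) (Fin k) ℝ)
    (aj : Fin (m + 1) → ℝ)
    (hrank : LinearIndependent ℝ ABᵀ)
    (hdep : aj = (AB * pinv AB).mulVec aj)
    (u' : Fin k → ℝ) (hu' : u' = (pinv AB).mulVec aj)
    (istar : Fin k) (histar : u' istar ≠ 0)
    -- `Ã_B` with column `i*` replaced by `Ã_j`
    (N : Matrix (Fin (m + 1)) (Fin k) ℝ)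
    (hN : N = Matrix.of fun i c => if c = istar then aj i else AB i c) :
    LinearIndependent ℝ Nᵀ := by
  have haj_eq : aj = AB *ᵥ u' := by rw [hu', mulVec_mulVec, ← hdep]
  have hN_update : N = AB.updateCol istar (AB *ᵥ u') := by
    ext i c
    simp [hN, updateCol_apply, haj_eq]
  rw [hN_update]
  exact linearIndependent_transpose_updateCol_mulVec hrank histar

theorem stmt4 {m n k : ℕ} (A : Matrix (Fin m) (Fin n) ℝ) (B : Fin k → Fin n)
    (hBinj : Function.Injective B) (j : Fin n) (hj : j ∉ Set.range B)
    (AB : Matrix (Fin (m + 1)) (Fin k) ℝ) (hAB : AB = (aug A).submatrix id B)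
    (aj : Fin (m + 1) → ℝ) (haj : aj = fun i => aug A i j)
    (hrank : LinearIndependent ℝ ABᵀ)
    (hdep : aj = (AB * pinv AB).mulVec aj)
    (u' : Fin k → ℝ) (hu' : u' = (pinv AB).mulVec aj)
    (istar : Fin k) (histar : u' istar ≠ 0)
    -- `Ã_B` with column `i*` replaced by `Ã_j`
    (N : Matrix (Fin (m + 1)) (Fin k) ℝ)
    (hN : N = Matrix.of fun i c => if c = istar then aj i else AB i c) :
    LinearIndependent ℝ Nᵀ :=
  stmt4_general AB aj hrank hdep u' hu' istar histar N hN
end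
end

section
/- (Von Neumann/Perceptron decrease lemma) Let z_t ∈ conv(q_1,...,q_n) ⊆ ℝ^m and let j minimize ⟨q_i, z_t⟩ over i. If ⟨q_j, z_t⟩ ≤ 0 and ‖q_i‖ ≤ 1 for all i, then z_{t+1} = z_t + θ(q_j − z_t), with θ chosen to minimize ‖z_{t+1}‖² over θ ∈ [0,1], satisfies ‖z_{t+1}‖² ≤ (‖z_t‖²‖q_j‖² − ⟨z_t,q_j⟩²)/‖z_t − q_j‖² ≤ ‖z_t‖²/(1 + ‖z_t‖²). -/
open RealInnerProductSpace

/-- Von Neumann/Perceptron decrease lemma with exact line search. -/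
theorem stmt10 {n m : ℕ} (q : Fin n → EuclideanSpace ℝ (Fin m))
    (hq : ∀ i, ‖q i‖ ≤ 1) (z : EuclideanSpace ℝ (Fin m))
    (hz : z ∈ convexHull ℝ (Set.range q))
    (j : Fin n) (hj : ∀ i, ⟪q j, z⟫ ≤ ⟪q i, z⟫)
    (hneg : ⟪q j, z⟫ ≤ 0)
    (hzq : z ≠ q j)
    -- exact line search step truncated to `[0,1]`
    (θ : ℝ) (hθ : θ = min 1 (max 0 (-⟪z, q j - z⟫ / ‖q j - z‖ ^ 2)))
    (z1 : EuclideanSpace ℝ (Fin m)) (hz1 : z1 = z + θ • (q j - z)) :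
    (∀ t ∈ Set.Icc (0 : ℝ) 1, ‖z1‖ ^ 2 ≤ ‖z + t • (q j - z)‖ ^ 2) ∧
      ‖z1‖ ^ 2 ≤ (‖z‖ ^ 2 * ‖q j‖ ^ 2 - ⟪z, q j⟫ ^ 2) / ‖z - q j‖ ^ 2 ∧
      (‖z‖ ^ 2 * ‖q j‖ ^ 2 - ⟪z, q j⟫ ^ 2) / ‖z - q j‖ ^ 2 ≤ ‖z‖ ^ 2 / (1 + ‖z‖ ^ 2) := by
  have hwne : q j - z ≠ 0 := sub_ne_zero.mpr (fun h => hzq h.symm)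
  set s : ℝ := ‖z‖ ^ 2 with hs
  set Q : ℝ := ‖q j‖ ^ 2 with hQdef
  set c : ℝ := ⟪z, q j⟫ with hc
  set a : ℝ := ‖q j - z‖ ^ 2 with hadef
  set b : ℝ := ⟪z, q j - z⟫ with hbdef
  have ha : (0 : ℝ) < a := by
    have := norm_pos_iff.mpr hwne
    positivity
  have hb : b = c - s := by
    rw [hbdef, inner_sub_right, hc, hs, real_inner_self_eq_norm_sq]
  have hA : a = s - 2 * c + Q := by
    rw [hadef, ← norm_sub_rev, @norm_sub_sq_real, hs, hc, hQdef]; try ring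
  have hzsub : ‖z - q j‖ ^ 2 = a := by rw [hadef, norm_sub_rev]
  -- convexity: ⟪q j, z⟫ ≤ ⟪z, z⟫
  have hcs : c ≤ s := by
    have hconv : Convex ℝ {x : EuclideanSpace ℝ (Fin m) | ⟪q j, z⟫ ≤ ⟪x, z⟫} := by
      apply convex_halfSpace_ge
      exact ⟨fun x y => inner_add_left x y z, fun r x => real_inner_smul_left x z r⟩
    have hsub : convexHull ℝ (Set.range q) ⊆ {x | ⟪q j, z⟫ ≤ ⟪x, z⟫} :=
      convexHull_min (by rintro x ⟨i, rfl⟩; exact hj i) hconv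
    have := hsub hz
    simp only [Set.mem_setOf_eq] at this
    rw [hc, real_inner_comm]
    rwa [hs, ← real_inner_self_eq_norm_sq]
  have hcneg : c ≤ 0 := by rw [hc, real_inner_comm]; exact hneg
  have hQ1 : Q ≤ 1 := by
    rw [hQdef]
    calc ‖q j‖ ^ 2 ≤ 1 ^ 2 := by
          apply pow_le_pow_left₀ (norm_nonneg _) (hq j)
      _ = 1 := one_pow 2
  have hsnn : (0 : ℝ) ≤ s := by positivity
  have hQnn : (0 : ℝ) ≤ Q := by positivity
  have hCS : c ^ 2 ≤ s * Q := by
    have h1 := abs_real_inner_le_norm z (q j)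
    nlinarith [abs_nonneg (⟪z, q j⟫ : ℝ), sq_abs (⟪z, q j⟫ : ℝ), norm_nonneg z, norm_nonneg (q j)]
  have hbneg : b ≤ 0 := by rw [hb]; linarith
  -- θ equals the unconstrained minimizer
  have hθval : θ = -b / a := by
    rw [hθ]
    have h0 : (0 : ℝ) ≤ -b / a := div_nonneg (by linarith) ha.le
    have h1 : -b / a ≤ 1 := by
      rw [div_le_one ha]; rw [hb, hA]; linarith
    rw [max_eq_right h0, min_eq_right h1]
  have hθa : θ * a = -b := by
    rw [hθval, div_mul_cancel₀ _ ha.ne']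
  have hkey : ∀ t : ℝ, ‖z + t • (q j - z)‖ ^ 2 = s + 2 * t * b + t ^ 2 * a := by
    intro t
    rw [@norm_add_sq_real, real_inner_smul_right, norm_smul, ← hbdef, hs]
    rw [mul_pow, Real.norm_eq_abs, sq_abs, ← hadef]
    ring
  have hz1sq : ‖z1‖ ^ 2 = s + θ * b := by
    rw [hz1, hkey θ]
    have : θ ^ 2 * a = θ * (θ * a) := by ring
    rw [this, hθa]; ring
  refine ⟨?_, ?_, ?_⟩
  · intro t _
    rw [hz1sq, hkey t]
    nlinarith [sq_nonneg (t * a + b), ha]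
  · rw [hz1sq, hzsub, le_div_iff₀ ha]
    have h1 : (s + θ * b) * a = s * a - b ^ 2 := by
      linear_combination b * hθa
    rw [h1, hb, hA]
    exact le_of_eq (by ring)
  · rw [hzsub, div_le_div_iff₀ ha (by positivity)]
    rw [hA]
    nlinarith [mul_nonneg hsnn (neg_nonneg.mpr hcneg), sq_nonneg c,
      mul_nonneg hsnn hsnn]
end

section
/- Let u' = Ã_B†Ã_j, augment Ã_B† with the column u', and perform row operations to turn the last column into the unit vector e_{i*} (where u'_{i*} ≠ 0); then the first p columns of the resulting matrix form a left inverse of Ã_{B⁺}, where B⁺ is B with B(i*) replaced by j. -/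
open Matrix

noncomputable section

lemma pinv_mul_self {p k : ℕ} (AB : Matrix (Fin p) (Fin k) ℝ)
    (hrank : LinearIndependent ℝ ABᵀ) : pinv AB * AB = 1 := by
  have hinj : Function.Injective AB.mulVec := by
    rw [Matrix.mulVec_injective_iff]; exact hrank
  have key : ∀ z, (ABᵀ * AB).mulVec z = 0 → z = 0 := by
    intro z hz
    have h1 : AB.mulVec z ⬝ᵥ AB.mulVec z = 0 := by
      calc AB.mulVec z ⬝ᵥ AB.mulVec z
          = Matrix.vecMul z ABᵀ ⬝ᵥ AB.mulVec z := by rw [Matrix.vecMul_transpose]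
        _ = z ⬝ᵥ ABᵀ.mulVec (AB.mulVec z) := (Matrix.dotProduct_mulVec _ _ _).symm
        _ = z ⬝ᵥ (ABᵀ * AB).mulVec z := by rw [Matrix.mulVec_mulVec]
        _ = 0 := by rw [hz, dotProduct_zero]
    have h2 : AB.mulVec z = 0 := dotProduct_self_eq_zero.mp h1
    have : AB.mulVec z = AB.mulVec 0 := by rw [h2, Matrix.mulVec_zero]
    exact hinj this
  have hunit : IsUnit (ABᵀ * AB) := by
    rw [← Matrix.linearIndependent_cols_iff_isUnit, ← Matrix.mulVec_injective_iff]
    intro x y hxy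
    have := key (x - y) (by rw [Matrix.mulVec_sub, hxy, sub_self])
    exact sub_eq_zero.mp this
  have hdet : IsUnit (ABᵀ * AB).det := (Matrix.isUnit_iff_isUnit_det _).mp hunit
  show (ABᵀ * AB)⁻¹ * ABᵀ * AB = 1
  rw [Matrix.mul_assoc, Matrix.nonsing_inv_mul _ hdet]

/-- Row operations turning the appended column `u'` into `e_{i*}` produce, from `Ã_B†`, a left
inverse of `Ã_{B⁺}` (the matrix `Ã_B` with column `i*` replaced by `Ã_j`). -/
theorem stmt14 {p k : ℕ} (AB : Matrix (Fin p) (Fin k) ℝ)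
    (hrank : LinearIndependent ℝ ABᵀ)
    (aj : Fin p → ℝ) (u' : Fin k → ℝ) (hu' : u' = (pinv AB).mulVec aj)
    (hdep : aj = AB.mulVec u')
    (istar : Fin k) (histar : u' istar ≠ 0)
    -- the elementary matrix performing the row operations: it adds to each row a multiple of
    -- row `i*` (and rescales row `i*`) so that `E.mulVec u' = e_{i*}`
    (E : Matrix (Fin k) (Fin k) ℝ)
    (hE : E = Matrix.of fun r c =>
      if c = istar then (if r = istar then 1 / u' istar else -(u' r) / u' istar)
      else (if r = c then (1 : ℝ) else 0))
    (ABplus : Matrix (Fin p) (Fin k) ℝ)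
    (hABplus : ABplus = Matrix.of fun i c => if c = istar then aj i else AB i c) :
    E.mulVec u' = Pi.single istar 1 ∧ (E * pinv AB) * ABplus = 1 := by
  have hmul : E.mulVec u' = Pi.single istar 1 := by
    funext i
    simp only [hE, Matrix.mulVec, dotProduct, Matrix.of_apply]
    by_cases hi : i = istar
    · have hfun : ∀ c ∈ Finset.univ, (if c = istar then (if i = istar then 1 / u' istar
          else -(u' i) / u' istar) else if i = c then (1:ℝ) else 0) * u' c
          = if c = istar then (1:ℝ) else 0 := by
        intro c _
        by_cases hc : c = istar
        · simp [hc, hi, div_mul_cancel₀, histar]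
        · have : i ≠ c := by rw [hi]; exact fun h => hc h.symm
          simp [hc, this]
      rw [Finset.sum_congr rfl hfun]
      simp [Pi.single_apply, hi]
    · have hfun : ∀ c ∈ Finset.univ, (if c = istar then (if i = istar then 1 / u' istar
          else -(u' i) / u' istar) else if i = c then (1:ℝ) else 0) * u' c
          = (if c = istar then -(u' i) else 0) + (if c = i then u' i else 0) := by
        intro c _
        by_cases hc : c = istar
        · have hci : c ≠ i := by rw [hc]; exact fun h => hi h.symm
          have hsi : istar ≠ i := fun h => hi h.symm
          simp [hc, hi, hci, hsi, div_mul_cancel₀, histar, neg_div, neg_mul]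
        · by_cases hci : c = i
          · simp [hc, hci, hi]
          · have hic : i ≠ c := fun h => hci h.symm
            simp [hc, hci, hic]
      rw [Finset.sum_congr rfl hfun, Finset.sum_add_distrib]
      simp [Pi.single_apply, hi]
  refine ⟨hmul, ?_⟩
  have hP : pinv AB * ABplus
      = Matrix.of fun r c => if c = istar then u' r else (1 : Matrix (Fin k) (Fin k) ℝ) r c := by
    funext r c
    by_cases hc : c = istar
    · show (pinv AB * ABplus) r c = _
      simp only [Matrix.mul_apply, hABplus, Matrix.of_apply, if_pos hc]
      rw [hu']
      rfl
    · show (pinv AB * ABplus) r c = _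
      have : (pinv AB * ABplus) r c = (pinv AB * AB) r c := by
        simp only [Matrix.mul_apply, hABplus, Matrix.of_apply, if_neg hc]
      rw [this, pinv_mul_self AB hrank]
      simp [Matrix.of_apply, hc]
  rw [Matrix.mul_assoc, hP]
  funext r c
  by_cases hc : c = istar
  · have : (E * Matrix.of fun r c => if c = istar then u' r
        else (1 : Matrix (Fin k) (Fin k) ℝ) r c) r c = E.mulVec u' r := by
      simp [Matrix.mul_apply, Matrix.mulVec, dotProduct, hc]
    rw [this, hmul]
    simp [Pi.single_apply, Matrix.one_apply, hc]
  · have : (E * Matrix.of fun r c => if c = istar then u' r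
        else (1 : Matrix (Fin k) (Fin k) ℝ) r c) r c = E r c := by
      simp only [Matrix.mul_apply, Matrix.of_apply, if_neg hc]
      rw [Finset.sum_eq_single c]
      · simp [Matrix.one_apply]
      · intro b _ hb; simp [Matrix.one_apply, hb]
      · simp
    rw [this, hE]
    simp [Matrix.one_apply, hc]
end
end
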